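/- The explosion-criterion series for the birth-death chain on {n+1, n+2, ...} with birth rates β and death rates δ converges if and only if the tail condition holds; that is, Σ_{i=n+1}^∞ [Π_{j=n+1}^i (δ_j/β_j)]·[Σ_{k=n+1}^i Π_{l=n+1}^k (β_{l−1}/δ_l)] < ∞ if and only if Σ_{j=n+1}^∞ ν_{j+1}·Σ_{k=n+1}^j 1/(ν_k·u_k) < ∞. -/

import Mathlib

open scoped BigOperators

/-- The explosion-criterion series for the birth-death chain on `{n+1, n+2, …}` with birth
rates `β` and death rates `δ` converges if and only if the tail condition holds:
`Σ_{i=n+1}^∞ [Π_{j=n+1}^i (δ_j/β_j)]·[Σ_{k=n+1}^i Π_{l=n+1}^k (β_{l−1}/δ_l)] < ∞`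
iff `Σ_{j=n+1}^∞ ν_{j+1}·Σ_{k=n+1}^j 1/(ν_k·u_k) < ∞`. -/
theorem dual_tail_explosion_iff (ν u d : ℕ → ℝ)
    (hν : ∀ p, 0 < ν p) (hu : ∀ p, 0 < u p) (hd : ∀ p, 0 < d p)
    (hdb : ∀ p : ℕ, ν p * u p = ν (p + 1) * d p)
    (hνsum : Summable ν)
    (n : ℕ)
    (S : ℕ → ℝ) (hS : ∀ p : ℕ, n ≤ p → S p = ∑ k ∈ Finset.Icc n p, ν k)
    (β δ : ℕ → ℝ)
    (hβ : ∀ p : ℕ, n ≤ p → β p = (S (p + 1) / S p) * d p)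
    (hδ : ∀ p : ℕ, n + 1 ≤ p → δ p = (S (p - 1) / S p) * u p) :
    Summable (fun i : ℕ =>
        (∏ j ∈ Finset.Icc (n + 1) (n + 1 + i), δ j / β j) *
          (∑ k ∈ Finset.Icc (n + 1) (n + 1 + i),
            ∏ l ∈ Finset.Icc (n + 1) k, β (l - 1) / δ l)) ↔
    Summable (fun i : ℕ =>
        ν (n + 1 + i + 1) * ∑ k ∈ Finset.Icc (n + 1) (n + 1 + i), 1 / (ν k * u k)) := by
  set T := ∑' k, ν k with hT
  have hSpos : ∀ p, n ≤ p → 0 < S p := by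
    intro p hp
    rw [hS p hp]
    exact Finset.sum_pos (fun k _ => hν k) ⟨n, Finset.mem_Icc.mpr ⟨le_refl _, hp⟩⟩
  have hSmono : ∀ p q, n ≤ p → p ≤ q → S p ≤ S q := by
    intro p q hp hpq
    rw [hS p hp, hS q (hp.trans hpq)]
    exact Finset.sum_le_sum_of_subset_of_nonneg
      (Finset.Icc_subset_Icc_right hpq) (fun k _ _ => (hν k).le)
  have hST : ∀ p, n ≤ p → S p ≤ T := by
    intro p hp
    rw [hS p hp]
    exact Summable.sum_le_tsum _ (fun k _ => (hν k).le) hνsum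
  have hTpos : 0 < T := lt_of_lt_of_le (hSpos n le_rfl) (hST n le_rfl)
  -- ratio lemmas
  have hratio : ∀ p, n + 1 ≤ p → δ p / β p = (S (p - 1) * ν (p + 1)) / (S (p + 1) * ν p) := by
    intro p hp
    rw [hδ p hp, hβ p (by omega)]
    have hdbp := hdb p
    have e1 := hSpos (p - 1) (by omega)
    have e2 := hSpos p (by omega)
    have e3 := hSpos (p + 1) (by omega)
    have e4 := hν p; have e5 := hν (p + 1); have e6 := hu p; have e7 := hd p
    field_simp
    linear_combination hdbp
  have hratio2 : ∀ p, n + 1 ≤ p →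
      β (p - 1) / δ p = (S p * S p * (ν (p - 1) * u (p - 1))) / (S (p - 1) * S (p - 1) * (ν p * u p)) := by
    intro p hp
    have h2 : p - 1 + 1 = p := by omega
    rw [hβ (p - 1) (by omega), hδ p hp, h2]
    have hdbp := hdb (p - 1)
    rw [h2] at hdbp
    have e1 := hSpos (p - 1) (by omega)
    have e2 := hSpos p (by omega)
    have e4 := hν p; have e5 := hν (p - 1); have e6 := hu p
    have e7 := hd (p - 1); have e8 := hu (p - 1)
    field_simp
    linear_combination -hdbp
  -- closed form for the product A
  have hA : ∀ i : ℕ, ∏ j ∈ Finset.Icc (n + 1) (n + 1 + i), δ j / β j =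
      (S n * S (n + 1) * ν (n + 1 + i + 1)) / (S (n + 1 + i) * S (n + 1 + i + 1) * ν (n + 1)) := by
    intro i
    induction i with
    | zero =>
      simp only [Nat.add_zero]
      rw [Finset.Icc_self, Finset.prod_singleton, hratio (n + 1) le_rfl]
      have e1 := hSpos (n + 1) (by omega)
      have e2 := hSpos (n + 1 + 1) (by omega)
      have e3 := hν (n + 1)
      simp only [Nat.add_sub_cancel]
      field_simp
    | succ i ih =>
      have hstep : n + 1 + (i + 1) = (n + 1 + i) + 1 := rfl
      rw [hstep, Finset.prod_Icc_succ_top (by omega), ih,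
        hratio (n + 1 + i + 1) (by omega)]
      have e1 := hSpos (n + 1 + i) (by omega)
      have e2 := hSpos (n + 1 + i + 1) (by omega)
      have e3 := hSpos (n + 1 + i + 1 + 1) (by omega)
      have e0 := hSpos n le_rfl
      have e0' := hSpos (n + 1) (by omega)
      have e4 := hν (n + 1); have e5 := hν (n + 1 + i + 1); have e6 := hν (n + 1 + i + 1 + 1)
      have hidx : n + 1 + i + 1 - 1 = n + 1 + i := by omega
      rw [hidx]
      field_simp
  -- closed form for the product B
  have hB : ∀ k, n + 1 ≤ k → ∏ l ∈ Finset.Icc (n + 1) k, β (l - 1) / δ l =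
      (S k * S k * (ν n * u n)) / (S n * S n * (ν k * u k)) := by
    intro k hk
    obtain ⟨m, rfl⟩ : ∃ m, k = n + 1 + m := ⟨k - (n + 1), by omega⟩
    clear hk
    induction m with
    | zero =>
      simp only [Nat.add_zero]
      rw [Finset.Icc_self, Finset.prod_singleton, hratio2 (n + 1) le_rfl]
      simp only [Nat.add_sub_cancel]
    | succ m ih =>
      have hstep : n + 1 + (m + 1) = (n + 1 + m) + 1 := rfl
      rw [hstep, Finset.prod_Icc_succ_top (by omega), ih,
        hratio2 (n + 1 + m + 1) (by omega)]
      have hidx : n + 1 + m + 1 - 1 = n + 1 + m := by omega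
      rw [hidx]
      have e1 := hSpos (n + 1 + m) (by omega)
      have e2 := hSpos (n + 1 + m + 1) (by omega)
      have e0 := hSpos n le_rfl
      have e4 := hν (n + 1 + m); have e5 := hν (n + 1 + m + 1)
      have e6 := hu (n + 1 + m); have e7 := hu (n + 1 + m + 1)
      have e8 := hν n; have e9 := hu n
      field_simp
  -- abbreviations
  set f : ℕ → ℝ := fun i =>
      (∏ j ∈ Finset.Icc (n + 1) (n + 1 + i), δ j / β j) *
        (∑ k ∈ Finset.Icc (n + 1) (n + 1 + i),
          ∏ l ∈ Finset.Icc (n + 1) k, β (l - 1) / δ l) with hf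
  set g : ℕ → ℝ := fun i =>
      ν (n + 1 + i + 1) * ∑ k ∈ Finset.Icc (n + 1) (n + 1 + i), 1 / (ν k * u k) with hg
  have hfval : ∀ i, f i = ∑ k ∈ Finset.Icc (n + 1) (n + 1 + i),
      (S n * S (n + 1) * ν (n + 1 + i + 1)) / (S (n + 1 + i) * S (n + 1 + i + 1) * ν (n + 1)) *
        ((S k * S k * (ν n * u n)) / (S n * S n * (ν k * u k))) := by
    intro i
    rw [hf]
    simp only
    rw [hA i, Finset.mul_sum]
    refine Finset.sum_congr rfl (fun k hk => ?_)
    rw [hB k (Finset.mem_Icc.mp hk).1]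
  -- constants
  set c1 : ℝ := S (n + 1) * (ν n * u n) * (S n * S n) / (ν (n + 1) * S n * (T * T)) with hc1
  set c2 : ℝ := S (n + 1) * (ν n * u n) * (T * T) / (ν (n + 1) * S n * (S n * S n)) with hc2
  have e0 := hSpos n le_rfl
  have e0' := hSpos (n + 1) (by omega)
  have hc1pos : 0 < c1 := by
    rw [hc1]
    exact div_pos (mul_pos (mul_pos e0' (mul_pos (hν n) (hu n))) (mul_pos e0 e0))
      (mul_pos (mul_pos (hν (n + 1)) e0) (mul_pos hTpos hTpos))
  have hc2pos : 0 < c2 := by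
    rw [hc2]
    exact div_pos (mul_pos (mul_pos e0' (mul_pos (hν n) (hu n))) (mul_pos hTpos hTpos))
      (mul_pos (mul_pos (hν (n + 1)) e0) (mul_pos e0 e0))
  have key : ∀ i, c1 * g i ≤ f i ∧ f i ≤ c2 * g i := by
    intro i
    have hgsum : c1 * g i = ∑ k ∈ Finset.Icc (n + 1) (n + 1 + i),
        c1 * (ν (n + 1 + i + 1) * (1 / (ν k * u k))) := by
      rw [hg]; simp only
      rw [Finset.mul_sum, Finset.mul_sum]
    have hgsum2 : c2 * g i = ∑ k ∈ Finset.Icc (n + 1) (n + 1 + i),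
        c2 * (ν (n + 1 + i + 1) * (1 / (ν k * u k))) := by
      rw [hg]; simp only
      rw [Finset.mul_sum, Finset.mul_sum]
    have hterm : ∀ k, n + 1 ≤ k → k ≤ n + 1 + i →
        c1 * (ν (n + 1 + i + 1) * (1 / (ν k * u k))) ≤
          (S n * S (n + 1) * ν (n + 1 + i + 1)) / (S (n + 1 + i) * S (n + 1 + i + 1) * ν (n + 1)) *
            ((S k * S k * (ν n * u n)) / (S n * S n * (ν k * u k))) ∧
        (S n * S (n + 1) * ν (n + 1 + i + 1)) / (S (n + 1 + i) * S (n + 1 + i + 1) * ν (n + 1)) *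
            ((S k * S k * (ν n * u n)) / (S n * S n * (ν k * u k))) ≤
          c2 * (ν (n + 1 + i + 1) * (1 / (ν k * u k))) := by
      intro k hk1 hk2
      have eSk := hSpos k (by omega)
      have ep1 := hSpos (n + 1 + i) (by omega)
      have ep2 := hSpos (n + 1 + i + 1) (by omega)
      have eν1 := hν (n + 1 + i + 1)
      have eνk := hν k; have euk := hu k
      have eν := hν n; have eu := hu n; have eν' := hν (n + 1)
      have hSkT : S k ≤ T := hST k (by omega)
      have hSnk : S n ≤ S k := hSmono n k le_rfl (by omega)
      have hSnp1 : S n ≤ S (n + 1 + i) := hSmono n _ le_rfl (by omega)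
      have hSnp2 : S n ≤ S (n + 1 + i + 1) := hSmono n _ le_rfl (by omega)
      have hSp1T : S (n + 1 + i) ≤ T := hST _ (by omega)
      have hSp2T : S (n + 1 + i + 1) ≤ T := hST _ (by omega)
      set Cq : ℝ := S (n + 1) * (ν n * u n) * ν (n + 1 + i + 1) * ν (n + 1) * (ν k * u k) * (S n * S n) with hCq
      have hCqnn : 0 ≤ Cq := by
        rw [hCq]
        have : (0:ℝ) < S (n + 1) * (ν n * u n) * ν (n + 1 + i + 1) * ν (n + 1) * (ν k * u k) * (S n * S n) :=
          mul_pos (mul_pos (mul_pos (mul_pos (mul_pos e0' (mul_pos eν eu)) eν1) eν')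
            (mul_pos eνk euk)) (mul_pos e0 e0)
        linarith
      constructor
      · have core : S n * S n * (S (n + 1 + i) * S (n + 1 + i + 1)) ≤ S k * S k * (T * T) :=
          mul_le_mul (mul_le_mul hSnk hSnk e0.le eSk.le)
            (mul_le_mul hSp1T hSp2T ep2.le hTpos.le)
            (mul_nonneg ep1.le ep2.le) (mul_nonneg eSk.le eSk.le)
        rw [hc1, mul_one_div, div_mul_div_comm, div_mul_div_comm,
          div_le_div_iff₀
            (mul_pos (mul_pos (mul_pos (hν (n + 1)) e0) (mul_pos hTpos hTpos)) (mul_pos eνk euk))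
            (mul_pos (mul_pos (mul_pos ep1 ep2) eν') (mul_pos (mul_pos e0 e0) (mul_pos eνk euk)))]
        calc S (n + 1) * (ν n * u n) * (S n * S n) * ν (n + 1 + i + 1) *
              (S (n + 1 + i) * S (n + 1 + i + 1) * ν (n + 1) * (S n * S n * (ν k * u k)))
            = Cq * (S n * S n * (S (n + 1 + i) * S (n + 1 + i + 1))) := by rw [hCq]; ring
          _ ≤ Cq * (S k * S k * (T * T)) := mul_le_mul_of_nonneg_left core hCqnn
          _ = S n * S (n + 1) * ν (n + 1 + i + 1) * (S k * S k * (ν n * u n)) *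
              (ν (n + 1) * S n * (T * T) * (ν k * u k)) := by rw [hCq]; ring
      · have core : S k * S k * (S n * S n) ≤ T * T * (S (n + 1 + i) * S (n + 1 + i + 1)) :=
          mul_le_mul (mul_le_mul hSkT hSkT eSk.le hTpos.le)
            (mul_le_mul hSnp1 hSnp2 e0.le ep1.le)
            (mul_nonneg e0.le e0.le) (mul_nonneg hTpos.le hTpos.le)
        rw [hc2, mul_one_div, div_mul_div_comm, div_mul_div_comm,
          div_le_div_iff₀
            (mul_pos (mul_pos (mul_pos ep1 ep2) eν') (mul_pos (mul_pos e0 e0) (mul_pos eνk euk)))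
            (mul_pos (mul_pos (mul_pos (hν (n + 1)) e0) (mul_pos e0 e0)) (mul_pos eνk euk))]
        calc S n * S (n + 1) * ν (n + 1 + i + 1) * (S k * S k * (ν n * u n)) *
              (ν (n + 1) * S n * (S n * S n) * (ν k * u k))
            = Cq * (S k * S k * (S n * S n)) := by rw [hCq]; ring
          _ ≤ Cq * (T * T * (S (n + 1 + i) * S (n + 1 + i + 1))) := mul_le_mul_of_nonneg_left core hCqnn
          _ = S (n + 1) * (ν n * u n) * (T * T) * ν (n + 1 + i + 1) *
              (S (n + 1 + i) * S (n + 1 + i + 1) * ν (n + 1) * (S n * S n * (ν k * u k))) := by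
              rw [hCq]; ring
    constructor
    · rw [hgsum, hfval i]
      exact Finset.sum_le_sum fun k hk =>
        (hterm k (Finset.mem_Icc.mp hk).1 (Finset.mem_Icc.mp hk).2).1
    · rw [hgsum2, hfval i]
      exact Finset.sum_le_sum fun k hk =>
        (hterm k (Finset.mem_Icc.mp hk).1 (Finset.mem_Icc.mp hk).2).2
  have hgnonneg : ∀ i, 0 ≤ g i := by
    intro i
    rw [hg]
    exact mul_nonneg (hν _).le
      (Finset.sum_nonneg fun k _ => one_div_nonneg.mpr (mul_pos (hν k) (hu k)).le)
  have hfnonneg : ∀ i, 0 ≤ f i :=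
    fun i => le_trans (mul_nonneg hc1pos.le (hgnonneg i)) (key i).1
  constructor
  · intro hfs
    refine Summable.of_nonneg_of_le hgnonneg (fun i => ?_) (hfs.mul_left c1⁻¹)
    rw [inv_mul_eq_div, le_div_iff₀ hc1pos]
    calc g i * c1 = c1 * g i := by ring
      _ ≤ f i := (key i).1
  · intro hgs
    exact Summable.of_nonneg_of_le hfnonneg (fun i => (key i).2) (hgs.mul_left c2)
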